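/- Let $(\varphi_n)$ be a sequence of continuous real-valued functions on $[a,b]$, and $(\lambda_n)\to\infty$ positive reals. Assume: (i) $\int_a^b \varphi_n^2\,dx \geq c > 0$ for all large $n$; (ii) $\sup_{[a,b]}|\varphi_n| \leq \varepsilon_n\lambda_n^{1/2}$ where $\varepsilon_n\to 0$; (iii) $|\int_a^b \varphi_n\,dx| \leq M\lambda_n^{-1/2}$ for all $n$ for some fixed $M>0$. Then for all sufficiently large $n$, $\int_a^b|\varphi_n|\,dx > |\int_a^b \varphi_n\,dx|$, and hence $\varphi_n$ changes sign on $[a,b]$. -/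

import Mathlib

/-!
On `[a, b]` one has `∫ φ² ≤ (sup |φ|) · ∫ |φ|`. If `∫ |φₙ| = |∫ φₙ|`, the sup-norm and
Kuznecov bounds would give `∫ φₙ² ≤ εₙ λₙ^{1/2} · M λₙ^{-1/2} = εₙ M → 0`, contradicting the
lower bound `c`. A function whose absolute integral strictly exceeds the absolute value of its
integral cannot keep a constant sign.
-/

open Filter Set intervalIntegral

namespace intervalIntegral

variable {a b : ℝ} {f : ℝ → ℝ}

theorem exists_pos_of_abs_integral_lt_integral_abs
    (h : |∫ x in a..b, f x| < ∫ x in a..b, |f x|) : ∃ x ∈ uIcc a b, 0 < f x := by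
  by_contra! hnonpos
  have habs : (∫ x in a..b, |f x|) = -∫ x in a..b, f x := by
    rw [← integral_neg]
    exact integral_congr fun x hx => abs_of_nonpos (hnonpos x hx)
  linarith [neg_le_abs (∫ x in a..b, f x)]

theorem exists_neg_of_abs_integral_lt_integral_abs
    (h : |∫ x in a..b, f x| < ∫ x in a..b, |f x|) : ∃ x ∈ uIcc a b, f x < 0 := by
  obtain ⟨x, hx, hpos⟩ :=
    exists_pos_of_abs_integral_lt_integral_abs (f := fun x => -f x) (a := a) (b := b)
      (by simpa only [integral_neg, abs_neg] using h)
  exact ⟨x, hx, neg_pos.mp hpos⟩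

theorem integral_sq_le_mul_integral_abs (hab : a ≤ b) (hf : ContinuousOn f (Icc a b))
    {K : ℝ} (hK : ∀ x ∈ Icc a b, |f x| ≤ K) :
    (∫ x in a..b, f x ^ 2) ≤ K * ∫ x in a..b, |f x| := by
  have hf' : ContinuousOn f (uIcc a b) := by rwa [uIcc_of_le hab]
  rw [← integral_const_mul]
  refine integral_mono_on hab (hf'.pow 2).intervalIntegrable
    (hf'.abs.intervalIntegrable.const_mul K) fun x hx => ?_
  rw [← sq_abs, sq]
  exact mul_le_mul_of_nonneg_right (hK x hx) (abs_nonneg _)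

theorem abs_integral_lt_integral_abs_of_mul_lt_integral_sq (hab : a ≤ b)
    (hf : ContinuousOn f (Icc a b)) {K L : ℝ} (hK : ∀ x ∈ Icc a b, |f x| ≤ K)
    (hL : |∫ x in a..b, f x| ≤ L) (hKL : K * L < ∫ x in a..b, f x ^ 2) :
    |∫ x in a..b, f x| < ∫ x in a..b, |f x| := by
  by_contra! hle
  have hK_nonneg : 0 ≤ K := (abs_nonneg _).trans (hK a (left_mem_Icc.mpr hab))
  have := calc
    (∫ x in a..b, f x ^ 2) ≤ K * ∫ x in a..b, |f x| := integral_sq_le_mul_integral_abs hab hf hK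
    _ ≤ K * L := mul_le_mul_of_nonneg_left (hle.trans hL) hK_nonneg
  linarith

end intervalIntegral

theorem Real.rpow_half_mul_rpow_neg_half {x : ℝ} (hx : 0 < x) :
    x ^ ((1 : ℝ) / 2) * x ^ (-(1 : ℝ) / 2) = 1 := by
  rw [← Real.rpow_add hx]
  norm_num

theorem stmt_7_general (a b : ℝ) (hab : a < b) (φ : ℕ → ℝ → ℝ) (lam ε : ℕ → ℝ)
    (c M : ℝ)
    (hcont : ∀ n, ContinuousOn (φ n) (Set.Icc a b))
    (hlam : ∀ n, 0 < lam n)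
    (hc : 0 < c)
    (hlow : ∀ᶠ n in Filter.atTop, c ≤ ∫ x in a..b, (φ n x) ^ 2)
    (hε : Filter.Tendsto ε Filter.atTop (nhds 0))
    (hsup : ∀ n, ∀ x ∈ Set.Icc a b, |φ n x| ≤ ε n * (lam n) ^ ((1 : ℝ) / 2))
    (hint : ∀ n, |∫ x in a..b, φ n x| ≤ M * (lam n) ^ (-(1 : ℝ) / 2)) :
    ∀ᶠ n in Filter.atTop,
      (|∫ x in a..b, φ n x| < ∫ x in a..b, |φ n x|) ∧
      (∃ x ∈ Set.Icc a b, 0 < φ n x) ∧ ∃ y ∈ Set.Icc a b, φ n y < 0 := by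
  have hεM : ∀ᶠ n in atTop, ε n * M < c := by
    refine (hε.mul_const M).eventually_lt_const ?_
    rwa [zero_mul]
  filter_upwards [hlow, hεM] with n hlow_n hεM_n
  have hKL : ε n * lam n ^ ((1 : ℝ) / 2) * (M * lam n ^ (-(1 : ℝ) / 2)) = ε n * M := by
    rw [mul_mul_mul_comm, Real.rpow_half_mul_rpow_neg_half (hlam n), mul_one]
  have hlt := abs_integral_lt_integral_abs_of_mul_lt_integral_sq hab.le (hcont n) (hsup n)
    (hint n) (by linarith)
  rw [← uIcc_of_le hab.le]
  exact ⟨hlt, exists_pos_of_abs_integral_lt_integral_abs hlt,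
    exists_neg_of_abs_integral_lt_integral_abs hlt⟩

theorem stmt_7 (a b : ℝ) (hab : a < b) (φ : ℕ → ℝ → ℝ) (lam ε : ℕ → ℝ)
    (c M : ℝ)
    (hcont : ∀ n, ContinuousOn (φ n) (Set.Icc a b))
    (hlam : ∀ n, 0 < lam n)
    (hlaminf : Filter.Tendsto lam Filter.atTop Filter.atTop)
    (hc : 0 < c)
    (hlow : ∀ᶠ n in Filter.atTop, c ≤ ∫ x in a..b, (φ n x) ^ 2)
    (hε : Filter.Tendsto ε Filter.atTop (nhds 0))
    (hsup : ∀ n, ∀ x ∈ Set.Icc a b, |φ n x| ≤ ε n * (lam n) ^ ((1 : ℝ) / 2))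
    (hM : 0 < M)
    (hint : ∀ n, |∫ x in a..b, φ n x| ≤ M * (lam n) ^ (-(1 : ℝ) / 2)) :
    ∀ᶠ n in Filter.atTop,
      (|∫ x in a..b, φ n x| < ∫ x in a..b, |φ n x|) ∧
      (∃ x ∈ Set.Icc a b, 0 < φ n x) ∧ ∃ y ∈ Set.Icc a b, φ n y < 0 :=
  stmt_7_general a b hab φ lam ε c M hcont hlam hc hlow hε hsup hint
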